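/- The image T([0,1]) of the Takagi function equals the interval [0, 2/3]. -/
import Mathlib


open Set

/-- `phi x` is the distance from `x` to the nearest integer. -/
noncomputable def phi (x : ℝ) : ℝ := min (Int.fract x) (1 - Int.fract x)

/-- The Takagi function. -/
noncomputable def T (x : ℝ) : ℝ := ∑' n : ℕ, (1/2 : ℝ)^n * phi (2^n * x)

/-- The `j`-th binary digit of `x ∈ [0,1)` (terminating expansion for dyadics). -/
noncomputable def eps (x : ℝ) (j : ℕ) : ℤ := ⌊2^j * x⌋ % 2

/-- `D k x = ∑_{j=1}^k (-1)^{ε_j(x)}`. -/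
noncomputable def D (k : ℕ) (x : ℝ) : ℤ :=
  ∑ j ∈ Finset.Icc 1 k, (-1 : ℤ)^((eps x j).toNat)

/-- `x₀` is a balanced dyadic rational of order `m`. -/
def BalancedDyadic (m : ℕ) (x₀ : ℝ) : Prop :=
  x₀ ∈ Set.Ico (0:ℝ) 1 ∧ (∃ k : ℕ, x₀ = (k : ℝ) / 4^m) ∧ D (2*m) x₀ = 0

/-- The generation of a balanced dyadic rational of order `m`. -/
noncomputable def generation (m : ℕ) (x₀ : ℝ) : ℕ :=
  ((Finset.Icc 1 (2*m)).filter (fun j => D j x₀ = 0)).card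

/-- The local level set of `x`. -/
def LocalLevelSet (x : ℝ) : Set ℝ :=
  {x' ∈ Set.Ico (0:ℝ) 1 | ∀ j : ℕ, |D j x'| = |D j x|}

/-- The level set of `T` at level `y`. -/
def L (y : ℝ) : Set ℝ := {x ∈ Set.Icc (0:ℝ) 1 | T x = y}

lemma phi_nonneg (x : ℝ) : 0 ≤ phi x :=
  le_min (Int.fract_nonneg x) (by linarith [Int.fract_lt_one x])

lemma phi_le_half (x : ℝ) : phi x ≤ 1/2 := by
  rcases le_or_gt (Int.fract x) (1/2) with h | h
  · exact le_trans (min_le_left _ _) h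
  · exact le_trans (min_le_right _ _) (by linarith)

lemma phi_int_add (n : ℤ) (x : ℝ) : phi (n + x) = phi x := by
  unfold phi; rw [add_comm, Int.fract_add_intCast]

lemma phi_eq_abs (x : ℝ) : phi x = |x - round x| := (abs_sub_round_eq_min x).symm

lemma phi_le_abs (x : ℝ) : phi x ≤ |x| := by
  rcases le_or_gt 0 x with h | h
  · refine le_trans (min_le_left _ _) ?_
    rw [abs_of_nonneg h, Int.fract]
    have : (0:ℝ) ≤ (⌊x⌋ : ℝ) := by exact_mod_cast Int.floor_nonneg.mpr h
    linarith
  · refine le_trans (min_le_right _ _) ?_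
    rw [abs_of_neg h, Int.fract]
    have h1 : ⌊x⌋ < 0 := by
      by_contra hc
      exact absurd (Int.floor_nonneg.mp (not_lt.mp hc)) (not_le.mpr h)
    have : ((⌊x⌋ : ℝ)) + 1 ≤ 0 := by exact_mod_cast Int.lt_iff_add_one_le.mp h1
    linarith

lemma phi_le_sub_int (x : ℝ) (n : ℤ) : phi x ≤ |x - n| := by
  have h : phi (↑n + (x - n)) = phi (x - n) := phi_int_add n (x - n)
  rw [show (↑n + (x - n) : ℝ) = x by ring] at h
  rw [h]; exact phi_le_abs _

lemma phi_lipschitz (x y : ℝ) : |phi x - phi y| ≤ |x - y| := by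
  rw [abs_sub_le_iff]
  constructor
  · have h1 : phi x ≤ |x - round y| := phi_le_sub_int x (round y)
    have h2 : phi y = |y - round y| := phi_eq_abs y
    have h3 : |x - (round y : ℝ)| ≤ |x - y| + |y - round y| := by
      have := abs_add_le (x - y) (y - round y)
      simpa [sub_add_sub_cancel] using this
    linarith
  · have h1 : phi y ≤ |y - round x| := phi_le_sub_int y (round x)
    have h2 : phi x = |x - round x| := phi_eq_abs x
    have h3 : |y - (round x : ℝ)| ≤ |y - x| + |x - round x| := by
      have := abs_add_le (y - x) (x - round x)
      simpa [sub_add_sub_cancel] using this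
    have h4 : |y - x| = |x - y| := abs_sub_comm y x
    linarith

lemma phi_continuous : Continuous phi := by
  have : LipschitzWith 1 phi := by
    intro x y
    rw [edist_dist, edist_dist, ENNReal.coe_one, one_mul,
      ENNReal.ofReal_le_ofReal_iff dist_nonneg]
    simpa [Real.dist_eq] using phi_lipschitz x y
  exact this.continuous

lemma half_geom_summable : Summable (fun n : ℕ => (1/2:ℝ)^n) :=
  summable_geometric_of_lt_one (by norm_num) (by norm_num)

lemma takagi_term_nonneg (x : ℝ) (n : ℕ) : 0 ≤ (1/2:ℝ)^n * phi (2^n * x) :=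
  mul_nonneg (by positivity) (phi_nonneg _)

lemma takagi_term_le (x : ℝ) (n : ℕ) : (1/2:ℝ)^n * phi (2^n * x) ≤ (1/2:ℝ)^n := by
  have := phi_le_half (2^n * x)
  nlinarith [pow_nonneg (by norm_num : (0:ℝ) ≤ 1/2) n]

lemma takagi_summable (x : ℝ) : Summable (fun n : ℕ => (1/2:ℝ)^n * phi (2^n * x)) :=
  Summable.of_nonneg_of_le (takagi_term_nonneg x) (takagi_term_le x) half_geom_summable

lemma T_continuous : Continuous T := by
  apply continuous_tsum (u := fun n : ℕ => (1/2:ℝ)^n)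
  · intro n
    exact continuous_const.mul (phi_continuous.comp (continuous_const.mul continuous_id))
  · exact half_geom_summable
  · intro n x
    rw [Real.norm_eq_abs, abs_of_nonneg (takagi_term_nonneg x n)]
    exact takagi_term_le x n

lemma T_nonneg (x : ℝ) : 0 ≤ T x := tsum_nonneg (takagi_term_nonneg x)

lemma phi_double (y : ℝ) : phi y + (1/2) * phi (2*y) ≤ 1/2 := by
  have hf : Int.fract (2*y) = Int.fract (2 * Int.fract y) := by
    have : (2:ℝ)*y = ((2 * ⌊y⌋ : ℤ) : ℝ) + 2 * Int.fract y := by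
      push_cast [Int.fract]; ring
    rw [this, Int.fract_intCast_add]
  have ht0 := Int.fract_nonneg y
  have ht1 := Int.fract_lt_one y
  set t := Int.fract y with htdef
  rcases lt_or_ge t (1/2) with h | h
  · have h2 : Int.fract (2*t) = 2*t := Int.fract_eq_self.mpr ⟨by linarith, by linarith⟩
    have b1 : phi y ≤ t := min_le_left _ _
    have b2 : phi (2*y) ≤ 1 - 2*t := by
      have : phi (2*y) ≤ 1 - Int.fract (2*y) := min_le_right _ _
      rw [hf, h2] at this; linarith
    linarith
  · have h2 : Int.fract (2*t) = 2*t - 1 := by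
      have : (2:ℝ)*t = ((1:ℤ):ℝ) + (2*t - 1) := by push_cast; ring
      rw [this, Int.fract_intCast_add, Int.fract_eq_self.mpr ⟨by linarith, by linarith⟩]
      push_cast
      ring
    have b1 : phi y ≤ 1 - t := min_le_right _ _
    have b2 : phi (2*y) ≤ 2*t - 1 := by
      have : phi (2*y) ≤ Int.fract (2*y) := min_le_left _ _
      rw [hf, h2] at this; linarith
    linarith

lemma T_le (x : ℝ) : T x ≤ 2/3 := by
  have hs := takagi_summable x
  set f := fun n : ℕ => (1/2:ℝ)^n * phi (2^n * x) with hfdef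
  have he : Summable (fun k => f (2*k)) :=
    hs.comp_injective (mul_right_injective₀ two_ne_zero)
  have ho : Summable (fun k => f (2*k+1)) :=
    hs.comp_injective (fun a b h => by omega)
  have hT : T x = ∑' k, (f (2*k) + f (2*k+1)) := by
    rw [show T x = ∑' n, f n from rfl, ← tsum_even_add_odd he ho, Summable.tsum_add he ho]
  have hg : Summable (fun k : ℕ => (1/2:ℝ) * (1/4)^k) :=
    (summable_geometric_of_lt_one (by norm_num) (by norm_num)).mul_left _
  have hb : ∀ k : ℕ, f (2*k) + f (2*k+1) ≤ (1/2:ℝ) * (1/4)^k := by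
    intro k
    have key := phi_double (2^(2*k) * x)
    have e1 : (2:ℝ)^(2*k+1) * x = 2 * (2^(2*k) * x) := by ring
    have e2 : ((1/2:ℝ))^(2*k) = (1/4)^k := by
      rw [pow_mul]; norm_num
    have e3 : ((1/2:ℝ))^(2*k+1) = (1/4)^k * (1/2) := by
      rw [pow_succ, e2]
    simp only [hfdef, e1, e2, e3]
    nlinarith [pow_nonneg (by norm_num : (0:ℝ) ≤ 1/4) k]
  calc T x = ∑' k, (f (2*k) + f (2*k+1)) := hT
    _ ≤ ∑' k : ℕ, (1/2:ℝ) * (1/4)^k := Summable.tsum_le_tsum hb (he.add ho) hg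
    _ = (1/2) * ∑' k : ℕ, ((1/4:ℝ))^k := tsum_mul_left
    _ = 2/3 := by
        rw [tsum_geometric_of_lt_one (by norm_num) (by norm_num)]; norm_num

lemma T_zero : T 0 = 0 := by
  have : ∀ n : ℕ, (1/2:ℝ)^n * phi (2^n * 0) = 0 := by
    intro n
    have : phi 0 = 0 := by unfold phi; rw [Int.fract_zero]; norm_num
    simp [this]
  unfold T
  rw [tsum_congr this, tsum_zero]

lemma phi_pow_two_thirds (n : ℕ) : phi ((2:ℝ)^n * (2/3)) = 1/3 := by
  have key : ∀ n : ℕ, ∃ m : ℤ, (2:ℝ)^n * (2/3) = m + 1/3 ∨ (2:ℝ)^n * (2/3) = m + 2/3 := by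
    intro n
    induction n with
    | zero => exact ⟨0, Or.inr (by norm_num)⟩
    | succ n ih =>
      obtain ⟨m, h | h⟩ := ih
      · refine ⟨2*m, Or.inr ?_⟩
        rw [pow_succ]
        push_cast
        nlinarith [h]
      · refine ⟨2*m+1, Or.inl ?_⟩
        rw [pow_succ]
        push_cast
        nlinarith [h]
  obtain ⟨m, h | h⟩ := key n
  · rw [h, show (m:ℝ) + 1/3 = ((m:ℤ):ℝ) + (1/3:ℝ) by norm_num, phi_int_add]
    unfold phi
    rw [Int.fract_eq_self.mpr ⟨by norm_num, by norm_num⟩]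
    norm_num
  · rw [h, show (m:ℝ) + 2/3 = ((m:ℤ):ℝ) + (2/3:ℝ) by norm_num, phi_int_add]
    unfold phi
    rw [Int.fract_eq_self.mpr ⟨by norm_num, by norm_num⟩]
    norm_num

lemma T_two_thirds : T (2/3) = 2/3 := by
  unfold T
  rw [tsum_congr (fun n => by rw [phi_pow_two_thirds n])]
  rw [tsum_mul_right, tsum_geometric_of_lt_one (by norm_num) (by norm_num)]
  norm_num

theorem takagi_range_eq :
    T '' Set.Icc (0:ℝ) 1 = Set.Icc (0:ℝ) (2/3) := by
  apply Subset.antisymm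
  · rintro y ⟨x, _, rfl⟩
    exact ⟨T_nonneg x, T_le x⟩
  · intro y hy
    have h1 : Icc (T 0) (T (2/3)) ⊆ T '' Icc (0:ℝ) (2/3) :=
      intermediate_value_Icc (by norm_num) T_continuous.continuousOn
    have h2 : y ∈ Icc (T 0) (T (2/3)) := by
      rw [T_zero, T_two_thirds]; exact hy
    obtain ⟨x, hx, hxy⟩ := h1 h2
    exact ⟨x, ⟨hx.1, hx.2.trans (by norm_num)⟩, hxy⟩
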